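/- arXiv:1708.08705 — 7 statements merged into one kernel-verified Lean document; each statement's English description precedes it below -/
import Mathlib

section
/- If D is a matrix with unit-norm columns and mutual coherence μ(D), then for any vector γ supported on a set of cardinality k with (k−1)μ(D) < 1, the near-isometry bound (1 − (k−1)μ(D))‖γ‖₂² ≤ ‖Dγ‖₂² ≤ (1 + (k−1)μ(D))‖γ‖₂² holds. -/
/-- The mutual coherence of a matrix `D`. -/
noncomputable def mutualCoherence {N M : ℕ} (D : Matrix (Fin N) (Fin M) ℝ) : ℝ :=
  sSup {x : ℝ | ∃ i j : Fin M, i ≠ j ∧ x = |∑ r, D r i * D r j|}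

/-- RIP bound via mutual coherence: if `D` has unit-norm columns and `(k-1)μ(D) < 1`, then for
any `γ` with at most `k` non-zeros,
`(1-(k-1)μ(D))‖γ‖₂² ≤ ‖Dγ‖₂² ≤ (1+(k-1)μ(D))‖γ‖₂²`. -/
theorem stmt_1 {N M k : ℕ} (D : Matrix (Fin N) (Fin M) ℝ)
    (hunit : ∀ j : Fin M, ∑ i, (D i j) ^ 2 = 1)
    (hk : ((k : ℝ) - 1) * mutualCoherence D < 1)
    (γ : Fin M → ℝ)
    (hγ : (Finset.univ.filter fun j => γ j ≠ 0).card ≤ k) :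
    (1 - ((k : ℝ) - 1) * mutualCoherence D) * ∑ j, (γ j) ^ 2 ≤ ∑ i, (D.mulVec γ i) ^ 2 ∧
      ∑ i, (D.mulVec γ i) ^ 2 ≤ (1 + ((k : ℝ) - 1) * mutualCoherence D) * ∑ j, (γ j) ^ 2 := by
  set μ := mutualCoherence D with hμdef
  have hμ0 : 0 ≤ μ := Real.sSup_nonneg (by rintro x ⟨i, j, hij, rfl⟩; exact abs_nonneg _)
  have hbdd : BddAbove {x : ℝ | ∃ i j : Fin M, i ≠ j ∧ x = |∑ r, D r i * D r j|} := by
    apply Set.Finite.bddAbove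
    apply Set.Finite.subset (Set.finite_range fun p : Fin M × Fin M => |∑ r, D r p.1 * D r p.2|)
    rintro x ⟨i, j, _, rfl⟩; exact ⟨(i, j), rfl⟩
  have hμle : ∀ i j : Fin M, i ≠ j → |∑ r, D r i * D r j| ≤ μ := fun i j hij =>
    le_csSup hbdd ⟨i, j, hij, rfl⟩
  set Q := ∑ j, (γ j) ^ 2 with hQdef
  have hQ0 : 0 ≤ Q := Finset.sum_nonneg fun j _ => sq_nonneg _
  set G : Fin M → Fin M → ℝ := fun j l => ∑ r, D r j * D r l with hGdef
  -- expansion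
  have hexp : ∑ i, (D.mulVec γ i) ^ 2 = ∑ j, ∑ l, γ j * γ l * G j l := by
    simp only [Matrix.mulVec, dotProduct, sq, Finset.sum_mul_sum, hGdef,
      Finset.mul_sum]
    rw [Finset.sum_comm]
    refine Finset.sum_congr rfl fun j _ => ?_
    rw [Finset.sum_comm]
    refine Finset.sum_congr rfl fun l _ => ?_
    rw [Finset.sum_mul]
    exact Finset.sum_congr rfl fun i _ => by ring
  have hGdiag : ∀ j, G j j = 1 := by
    intro j
    rw [hGdef]
    simpa [sq] using hunit j
  -- split diagonal
  have hsplit : ∑ j, ∑ l, γ j * γ l * G j l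
      = Q + ∑ j, ∑ l ∈ Finset.univ.erase j, γ j * γ l * G j l := by
    rw [hQdef, ← Finset.sum_add_distrib]
    refine Finset.sum_congr rfl fun j _ => ?_
    rw [← Finset.add_sum_erase _ _ (Finset.mem_univ j), hGdiag j]
    ring_nf
  set E := ∑ j, ∑ l ∈ Finset.univ.erase j, γ j * γ l * G j l with hEdef
  -- bound |E|
  have hE1 : |E| ≤ ∑ j, ∑ l ∈ Finset.univ.erase j, |γ j| * |γ l| * μ := by
    refine (Finset.abs_sum_le_sum_abs _ _).trans (Finset.sum_le_sum fun j _ => ?_)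
    refine (Finset.abs_sum_le_sum_abs _ _).trans (Finset.sum_le_sum fun l hl => ?_)
    rw [abs_mul, abs_mul]
    exact mul_le_mul_of_nonneg_left (hμle j l (Finset.ne_of_mem_erase hl).symm)
      (mul_nonneg (abs_nonneg _) (abs_nonneg _))
  have hoff : ∑ j, ∑ l ∈ Finset.univ.erase j, |γ j| * |γ l|
      = (∑ j, |γ j|) ^ 2 - Q := by
    have h1 : (∑ j, |γ j|) ^ 2 = ∑ j, ∑ l, |γ j| * |γ l| := by
      rw [sq, Finset.sum_mul_sum]
    rw [h1, hQdef, eq_sub_iff_add_eq, ← Finset.sum_add_distrib]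
    refine Finset.sum_congr rfl fun j _ => ?_
    rw [← Finset.add_sum_erase _ (fun l => |γ j| * |γ l|) (Finset.mem_univ j)]
    rw [← abs_mul, ← sq, abs_sq]
    ring
  -- Cauchy-Schwarz on the support
  have hCS : (∑ j, |γ j|) ^ 2 ≤ (k : ℝ) * Q := by
    set T := Finset.univ.filter fun j => γ j ≠ 0 with hT
    have h1 : ∑ j, |γ j| = ∑ j ∈ T, |γ j| := by
      rw [hT]
      rw [Finset.sum_filter_of_ne]
      intro j _ h
      intro hj; rw [hj] at h; simp at h
    have h2 : (∑ j ∈ T, 1 * |γ j|) ^ 2 ≤ (∑ j ∈ T, 1 ^ 2) * ∑ j ∈ T, |γ j| ^ 2 :=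
      Finset.sum_mul_sq_le_sq_mul_sq T _ _
    have h3 : (∑ j ∈ T, (1:ℝ) ^ 2) = T.card := by simp
    have h4 : ∑ j ∈ T, |γ j| ^ 2 ≤ Q := by
      rw [hQdef]
      simp only [sq_abs]
      exact Finset.sum_le_sum_of_subset_of_nonneg (Finset.subset_univ _)
        (fun j _ _ => sq_nonneg _)
    have h5 : (T.card : ℝ) ≤ k := by exact_mod_cast hγ
    calc (∑ j, |γ j|) ^ 2 = (∑ j ∈ T, 1 * |γ j|) ^ 2 := by rw [h1]; simp
      _ ≤ (∑ j ∈ T, 1 ^ 2) * ∑ j ∈ T, |γ j| ^ 2 := h2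
      _ = (T.card : ℝ) * ∑ j ∈ T, |γ j| ^ 2 := by rw [h3]
      _ ≤ (k : ℝ) * Q := by
          apply mul_le_mul h5 h4 (Finset.sum_nonneg fun j _ => sq_nonneg _) (Nat.cast_nonneg _)
  have hEbound : |E| ≤ ((k : ℝ) - 1) * μ * Q := by
    calc |E| ≤ ∑ j, ∑ l ∈ Finset.univ.erase j, |γ j| * |γ l| * μ := hE1
      _ = μ * ((∑ j, |γ j|) ^ 2 - Q) := by
          rw [← hoff, Finset.mul_sum]
          refine Finset.sum_congr rfl fun j _ => ?_
          rw [Finset.mul_sum]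
          exact Finset.sum_congr rfl fun l _ => by ring
      _ ≤ μ * ((k : ℝ) * Q - Q) := by
          apply mul_le_mul_of_nonneg_left _ hμ0
          linarith [hCS]
      _ = ((k : ℝ) - 1) * μ * Q := by ring
  have habs := abs_le.mp hEbound
  have htot : ∑ i, (D.mulVec γ i) ^ 2 = Q + E := by rw [hexp, hsplit]
  constructor
  · rw [htot]; nlinarith [habs.1]
  · rw [htot]; nlinarith [habs.2]
end

section
/- Local one-sided near isometry: if the convolutional dictionary D satisfies the Stripe-RIP condition with constant δ_k, i.e., (1−δ_k)‖γ‖₂² ≤ ‖Dγ‖₂² ≤ (1+δ_k)‖γ‖₂² for all γ with ‖γ‖ˢ_{0,∞} = k, then for any such γ, the maximal squared patch-norm of Dγ is bounded: (‖Dγ‖ᵖ_{2,∞})² ≤ (1+δ_k)(‖γ‖ˢ_{2,∞})². -/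
/-- Local one-sided near isometry: if the convolutional dictionary `D` (patch `P i` of `Dγ`
depends only on stripe `S i` of `γ`) satisfies the Stripe-RIP condition with constant `δ`, i.e.
`(1-δ)‖γ‖₂² ≤ ‖Dγ‖₂² ≤ (1+δ)‖γ‖₂²` for all `γ` with `‖γ‖ˢ_{0,∞} = k`, then for any such `γ`
the maximal squared patch norm of `Dγ` is bounded by `(1+δ)` times the maximal squared stripe
norm of `γ`:  `(‖Dγ‖ᵖ_{2,∞})² ≤ (1+δ)(‖γ‖ˢ_{2,∞})²`. -/
theorem stmt_3 {N M ι : ℕ} [NeZero ι]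
    (D : Matrix (Fin N) (Fin M) ℝ) (k : ℕ) (δ : ℝ)
    (P : Fin ι → Finset (Fin N)) (S : Fin ι → Finset (Fin M))
    (hloc : ∀ i : Fin ι, ∀ r ∈ P i, ∀ c : Fin M, c ∉ S i → D r c = 0)
    (hSRIP : ∀ γ : Fin M → ℝ,
      (Finset.univ.sup fun i : Fin ι => ((S i).filter fun t => γ t ≠ 0).card) = k →
      (1 - δ) * ∑ j, (γ j) ^ 2 ≤ ∑ r, (D.mulVec γ r) ^ 2 ∧
        ∑ r, (D.mulVec γ r) ^ 2 ≤ (1 + δ) * ∑ j, (γ j) ^ 2)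
    (γ : Fin M → ℝ)
    (hγ : (Finset.univ.sup fun i : Fin ι => ((S i).filter fun t => γ t ≠ 0).card) = k) :
    (⨆ i : Fin ι, ∑ r ∈ P i, (D.mulVec γ r) ^ 2) ≤
      (1 + δ) * ⨆ i : Fin ι, ∑ t ∈ S i, (γ t) ^ 2 := by
  classical
  by_cases hγ0 : γ = 0
  · subst hγ0
    simp [Matrix.mulVec_zero]
  -- positivity of ∑ γ² and 1+δ ≥ 0
  obtain ⟨t0, ht0⟩ : ∃ t, γ t ≠ 0 := by
    by_contra h
    push_neg at h
    exact hγ0 (funext h)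
  have hsum : 0 < ∑ j, (γ j) ^ 2 :=
    Finset.sum_pos' (fun j _ => sq_nonneg _)
      ⟨t0, Finset.mem_univ _, by positivity⟩
  have hδ : 0 ≤ 1 + δ := by
    have h := (hSRIP γ hγ).2
    nlinarith [Finset.sum_nonneg (fun r (_ : r ∈ Finset.univ) => sq_nonneg (D.mulVec γ r))]
  have hbdd : BddAbove (Set.range fun j : Fin ι => ∑ t ∈ S j, (γ t) ^ 2) :=
    (Set.finite_range _).bddAbove
  obtain ⟨i₀, _, hi₀⟩ :=
    Finset.exists_mem_eq_sup (Finset.univ : Finset (Fin ι)) Finset.univ_nonempty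
      (fun i : Fin ι => ((S i).filter fun t => γ t ≠ 0).card)
  have hi₀k : ((S i₀).filter fun t => γ t ≠ 0).card = k := by rw [← hi₀, hγ]
  have hle : ∀ j : Fin ι, ((S j).filter fun t => γ t ≠ 0).card ≤ k := by
    intro j
    rw [← hγ]
    exact Finset.le_sup (f := fun i : Fin ι => ((S i).filter fun t => γ t ≠ 0).card)
      (Finset.mem_univ j)
  apply ciSup_le
  intro i
  set E : Finset (Fin M) := (S i₀).filter fun t => γ t ≠ 0 with hE
  set γi : Fin M → ℝ := fun t => if t ∈ S i then γ t else 0 with hγi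
  set χ : Fin M → ℝ := fun t => if t ∈ E ∧ t ∉ S i then γ t else 0 with hχ
  have hA : ∑ j, (γi j) ^ 2 = ∑ t ∈ S i, (γ t) ^ 2 := by
    rw [← Finset.univ_inter (S i), ← Finset.sum_ite_mem]
    apply Finset.sum_congr rfl
    intro j _
    by_cases hj : j ∈ S i <;> simp [hγi, hj]
  set B := ∑ j, (χ j) ^ 2 with hBdef
  have hB : 0 ≤ B := Finset.sum_nonneg fun j _ => sq_nonneg _
  have key : ∀ ε : ℝ, 0 < ε →
      ∑ r ∈ P i, (D.mulVec γ r) ^ 2 ≤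
        (1 + δ) * (∑ t ∈ S i, (γ t) ^ 2) + ε ^ 2 * ((1 + δ) * B) := by
    intro ε hε
    set γ' : Fin M → ℝ := fun t => γi t + ε * χ t with hγ'
    have hsupp : ∀ t, γ t = 0 → γ' t = 0 := by
      intro t ht
      simp [hγ', hγi, hχ, ht]
    have hcount :
        (Finset.univ.sup fun j : Fin ι => ((S j).filter fun t => γ' t ≠ 0).card) = k := by
      apply le_antisymm
      · apply Finset.sup_le
        intro j _
        refine le_trans (Finset.card_le_card ?_) (hle j)
        intro t ht
        rw [Finset.mem_filter] at ht ⊢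
        refine ⟨ht.1, fun h0 => ht.2 (hsupp t h0)⟩
      · rw [← hi₀k]
        have hEeq : E = (S i₀).filter fun t => γ' t ≠ 0 := by
          ext t
          simp only [hE, Finset.mem_filter]
          constructor
          · rintro ⟨hts, htγ⟩
            refine ⟨hts, ?_⟩
            by_cases hti : t ∈ S i
            · simp [hγ', hγi, hχ, hti, htγ]
            · simp only [hγ', hγi, hχ, hti, if_neg hti]
              simp only [Finset.mem_filter, hE, and_true, not_false_iff]
              simp [hts, htγ, hε.ne']
          · rintro ⟨hts, htγ'⟩
            exact ⟨hts, fun h0 => htγ' (hsupp t h0)⟩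
        rw [hEeq]
        exact Finset.le_sup (f := fun j : Fin ι => ((S j).filter fun t => γ' t ≠ 0).card)
          (Finset.mem_univ i₀)
    have h2 := (hSRIP γ' hcount).2
    have hpatch : ∀ r ∈ P i, D.mulVec γ' r = D.mulVec γ r := by
      intro r hr
      simp only [Matrix.mulVec, dotProduct]
      apply Finset.sum_congr rfl
      intro c _
      by_cases hc : c ∈ S i
      · simp [hγ', hγi, hχ, hc]
      · simp [hloc i r hr c hc]
    have horth : ∀ j, γi j * χ j = 0 := by
      intro j
      by_cases hj : j ∈ S i <;> simp [hγi, hχ, hj]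
    have hnorm : ∑ j, (γ' j) ^ 2 = (∑ t ∈ S i, (γ t) ^ 2) + ε ^ 2 * B := by
      have : ∀ j, (γ' j) ^ 2 = (γi j) ^ 2 + ε ^ 2 * (χ j) ^ 2 := by
        intro j
        have := horth j
        simp only [hγ']
        ring_nf
        nlinarith [horth j]
      rw [Finset.sum_congr rfl fun j _ => this j, Finset.sum_add_distrib, ← Finset.mul_sum,
        hA, ← hBdef]
    calc ∑ r ∈ P i, (D.mulVec γ r) ^ 2
        = ∑ r ∈ P i, (D.mulVec γ' r) ^ 2 :=
          (Finset.sum_congr rfl fun r hr => by rw [hpatch r hr]).symm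
      _ ≤ ∑ r, (D.mulVec γ' r) ^ 2 :=
          Finset.sum_le_sum_of_subset_of_nonneg (Finset.subset_univ _)
            (fun r _ _ => sq_nonneg _)
      _ ≤ (1 + δ) * ∑ j, (γ' j) ^ 2 := h2
      _ = (1 + δ) * (∑ t ∈ S i, (γ t) ^ 2) + ε ^ 2 * ((1 + δ) * B) := by
          rw [hnorm]; ring
  have hstep : ∑ r ∈ P i, (D.mulVec γ r) ^ 2 ≤ (1 + δ) * ∑ t ∈ S i, (γ t) ^ 2 := by
    apply le_of_forall_pos_le_add
    intro ε' hε'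
    set C := (1 + δ) * B with hC
    have hC0 : 0 ≤ C := mul_nonneg hδ hB
    have hεpos : 0 < min 1 (ε' / (C + 1)) := by
      apply lt_min one_pos
      positivity
    have hk := key _ hεpos
    have h1 : min 1 (ε' / (C + 1)) ≤ 1 := min_le_left _ _
    have h2 : min 1 (ε' / (C + 1)) ≤ ε' / (C + 1) := min_le_right _ _
    have h3 : (min 1 (ε' / (C + 1))) ^ 2 * C ≤ ε' := by
      have hm0 : 0 ≤ min 1 (ε' / (C + 1)) := hεpos.le
      have hsq : (min 1 (ε' / (C + 1))) ^ 2 ≤ ε' / (C + 1) := by nlinarith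
      have : (min 1 (ε' / (C + 1))) ^ 2 * C ≤ (ε' / (C + 1)) * C :=
        mul_le_mul_of_nonneg_right hsq hC0
      refine this.trans ?_
      rw [div_mul_eq_mul_div, div_le_iff₀ (by positivity)]
      nlinarith
    linarith
  refine hstep.trans ?_
  have : (∑ t ∈ S i, (γ t) ^ 2) ≤ ⨆ j : Fin ι, ∑ t ∈ S j, (γ t) ^ 2 :=
    le_ciSup hbdd i
  nlinarith
end

section
/- If two vectors γ and γ̂ both satisfy ‖γ‖₀ ≤ k and ‖γ̂‖₀ ≤ k with (2k−1)μ(D) < 1, D having unit-norm columns and mutual coherence μ(D), and ‖D(γ − γ̂)‖₂ ≤ 2E₀, then ‖γ − γ̂‖₂² ≤ 4E₀² / (1 − (2k−1)μ(D)). -/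
/-- If `γ` and `γ̂` are both `k`-sparse, `(2k-1)μ(D) < 1` for a dictionary `D` with unit-norm
columns, and `‖D(γ - γ̂)‖₂ ≤ 2E₀`, then `‖γ - γ̂‖₂² ≤ 4E₀²/(1-(2k-1)μ(D))`. -/
theorem stmt_5 {N M k : ℕ} (D : Matrix (Fin N) (Fin M) ℝ)
    (hunit : ∀ j : Fin M, ∑ i, (D i j) ^ 2 = 1)
    (hk : (2 * (k : ℝ) - 1) * mutualCoherence D < 1)
    (γ γh : Fin M → ℝ) (E₀ : ℝ)
    (hγ : (Finset.univ.filter fun j => γ j ≠ 0).card ≤ k)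
    (hγh : (Finset.univ.filter fun j => γh j ≠ 0).card ≤ k)
    (herr : Real.sqrt (∑ i, (D.mulVec (fun j => γ j - γh j) i) ^ 2) ≤ 2 * E₀) :
    ∑ j, (γ j - γh j) ^ 2 ≤ 4 * E₀ ^ 2 / (1 - (2 * (k : ℝ) - 1) * mutualCoherence D) := by
  set μ := mutualCoherence D with hμdef
  set x : Fin M → ℝ := fun j => γ j - γh j with hxdef
  -- the off-diagonal Gram entries are bounded by μ
  have hbdd : BddAbove {y : ℝ | ∃ i j : Fin M, i ≠ j ∧ y = |∑ r, D r i * D r j|} := by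
    refine ⟨1, ?_⟩
    rintro y ⟨i, j, hij, rfl⟩
    have hcs := Finset.sum_mul_sq_le_sq_mul_sq Finset.univ (fun r => D r i) (fun r => D r j)
    rw [hunit i, hunit j] at hcs
    nlinarith [abs_nonneg (∑ r, D r i * D r j), sq_abs (∑ r, D r i * D r j)]
  have hG : ∀ i j : Fin M, i ≠ j → |∑ r, D r i * D r j| ≤ μ := fun i j hij =>
    le_csSup hbdd ⟨i, j, hij, rfl⟩
  have hμ0 : 0 ≤ μ := Real.sSup_nonneg (by rintro y ⟨i, j, hij, rfl⟩; exact abs_nonneg _)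
  -- support of x
  set S : Finset (Fin M) := Finset.univ.filter (fun j => x j ≠ 0) with hSdef
  have hScard : (S.card : ℝ) ≤ 2 * k := by
    have hsub : S ⊆ (Finset.univ.filter fun j => γ j ≠ 0) ∪
        (Finset.univ.filter fun j => γh j ≠ 0) := by
      intro j hj
      simp only [hSdef, Finset.mem_filter, Finset.mem_univ, true_and] at hj
      simp only [Finset.mem_union, Finset.mem_filter, Finset.mem_univ, true_and]
      by_contra h
      push_neg at h
      exact hj (by simp [hxdef, h.1, h.2])
    have := (Finset.card_le_card hsub).trans
      ((Finset.card_union_le _ _).trans (add_le_add hγ hγh))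
    calc (S.card : ℝ) ≤ (k : ℝ) + k := by exact_mod_cast this
    _ = 2 * k := by ring
  -- key expansion of ‖Dx‖²
  have key : ∑ i, (D.mulVec x i) ^ 2
      = ∑ j, ∑ l, x j * x l * (∑ r, D r j * D r l) := by
    simp only [Matrix.mulVec, dotProduct, sq, Finset.sum_mul_sum]
    rw [Finset.sum_comm]
    refine Finset.sum_congr rfl fun j _ => ?_
    rw [Finset.sum_comm]
    refine Finset.sum_congr rfl fun l _ => ?_
    rw [Finset.mul_sum]
    exact Finset.sum_congr rfl fun r _ => by ring
  set T : ℝ := ∑ j, ∑ l ∈ Finset.univ.erase j, x j * x l * (∑ r, D r j * D r l) with hTdef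
  have key2 : ∑ i, (D.mulVec x i) ^ 2 = (∑ j, x j ^ 2) + T := by
    rw [key, hTdef, ← Finset.sum_add_distrib]
    refine Finset.sum_congr rfl fun j _ => ?_
    rw [← Finset.add_sum_erase _ _ (Finset.mem_univ j)]
    congr 1
    have h1 : (∑ r, D r j * D r j) = 1 := by
      rw [← hunit j]; exact Finset.sum_congr rfl fun r _ => (sq (D r j)).symm
    rw [h1]; ring
  -- bound |T|
  have habs1 : |T| ≤ μ * ∑ j, ∑ l ∈ Finset.univ.erase j, |x j| * |x l| := by
    rw [Finset.mul_sum]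
    refine (Finset.abs_sum_le_sum_abs _ _).trans (Finset.sum_le_sum fun j _ => ?_)
    rw [Finset.mul_sum]
    refine (Finset.abs_sum_le_sum_abs _ _).trans (Finset.sum_le_sum fun l hl => ?_)
    have hlj : l ≠ j := (Finset.mem_erase.mp hl).1
    calc |x j * x l * (∑ r, D r j * D r l)|
        = |x j| * |x l| * |∑ r, D r j * D r l| := by rw [abs_mul, abs_mul]
      _ ≤ |x j| * |x l| * μ := by
          exact mul_le_mul_of_nonneg_left (hG j l hlj.symm)
            (mul_nonneg (abs_nonneg _) (abs_nonneg _))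
      _ = μ * (|x j| * |x l|) := by ring
  have habs2 : ∑ j, ∑ l ∈ Finset.univ.erase j, |x j| * |x l|
      = (∑ j, |x j|) ^ 2 - ∑ j, x j ^ 2 := by
    have : ∀ j : Fin M, ∑ l ∈ Finset.univ.erase j, |x j| * |x l|
        = |x j| * (∑ l, |x l|) - x j ^ 2 := by
      intro j
      rw [← Finset.mul_sum, Finset.sum_erase_eq_sub (Finset.mem_univ j)]
      rw [mul_sub, ← abs_mul, abs_mul_self, sq]
    simp only [this]
    rw [Finset.sum_sub_distrib, ← Finset.sum_mul, sq]
  have habs3 : (∑ j, |x j|) ^ 2 ≤ (S.card : ℝ) * ∑ j, x j ^ 2 := by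
    have hsum_eq : ∑ j, |x j| = ∑ j ∈ S, |x j| := by
      rw [hSdef]
      refine (Finset.sum_filter_of_ne fun j _ h => ?_).symm
      exact fun hx0 => h (by rw [hx0, abs_zero])
    have hcs := sq_sum_le_card_mul_sum_sq (s := S) (f := fun j => |x j|)
    simp only [sq_abs] at hcs
    rw [hsum_eq]
    refine hcs.trans ?_
    have : ∑ j ∈ S, x j ^ 2 ≤ ∑ j, x j ^ 2 :=
      Finset.sum_le_sum_of_subset_of_nonneg (Finset.subset_univ S)
        (fun j _ _ => sq_nonneg _)
    exact mul_le_mul_of_nonneg_left this (Nat.cast_nonneg _)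
  have hxs0 : 0 ≤ ∑ j, x j ^ 2 := Finset.sum_nonneg fun j _ => sq_nonneg _
  have hTbound : |T| ≤ μ * (2 * (k : ℝ) - 1) * ∑ j, x j ^ 2 := by
    refine habs1.trans ?_
    rw [habs2]
    have h1 : (∑ j, |x j|) ^ 2 - ∑ j, x j ^ 2 ≤ (2 * (k : ℝ) - 1) * ∑ j, x j ^ 2 := by
      have := habs3.trans (mul_le_mul_of_nonneg_right hScard hxs0)
      nlinarith
    calc μ * ((∑ j, |x j|) ^ 2 - ∑ j, x j ^ 2)
        ≤ μ * ((2 * (k : ℝ) - 1) * ∑ j, x j ^ 2) := mul_le_mul_of_nonneg_left h1 hμ0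
      _ = μ * (2 * (k : ℝ) - 1) * ∑ j, x j ^ 2 := by ring
  -- bound on ‖Dx‖²
  have hDx0 : 0 ≤ ∑ i, (D.mulVec x i) ^ 2 := Finset.sum_nonneg fun i _ => sq_nonneg _
  have hDx : ∑ i, (D.mulVec x i) ^ 2 ≤ 4 * E₀ ^ 2 := by
    have h1 := Real.sq_sqrt hDx0
    have h2 := Real.sqrt_nonneg (∑ i, (D.mulVec x i) ^ 2)
    nlinarith [herr]
  -- combine
  have hdenom : 0 < 1 - (2 * (k : ℝ) - 1) * μ := by linarith
  show ∑ j, x j ^ 2 ≤ 4 * E₀ ^ 2 / (1 - (2 * (k : ℝ) - 1) * μ)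
  rw [le_div_iff₀ hdenom]
  nlinarith [key2, hTbound, hDx, le_abs_self T, neg_abs_le T]
end

section
/- Support propagation under the Non-Vanishing-Support property: if γ satisfies the N.V.S. property for dictionary D (i.e., ‖Dγ‖₀ equals the number of non-zero rows of D_T where T = supp(γ)), and γ̂ is any vector with supp(γ̂) ⊆ supp(γ), then supp(Dγ̂) ⊆ supp(Dγ), and consequently ‖Dγ̂‖₀ ≤ ‖Dγ‖₀. -/
/-!
Every row of `D γ` is a combination of the entries of `γ` on `T = supp γ`, so `supp (D γ)` lies in
the set of rows of `D_T` that are non-zero, and the same holds for any `γ̂` supported in `T`.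
The N.V.S. property says that the first inclusion is between finite sets of equal size, hence an
equality; the second inclusion then lands in `supp (D γ)`.
-/

open Function Matrix

namespace Matrix

variable {m n R : Type*} [Fintype n] [NonUnitalNonAssocSemiring R]

/-- The rows of the column submatrix `D_T`, `T = supp γ`, that are not identically zero. -/
def nonzeroRowsOn (D : Matrix m n R) (γ : n → R) : Set m :=
  {r | ∃ c, γ c ≠ 0 ∧ D r c ≠ 0}

def HasNonVanishingSupport (D : Matrix m n R) (γ : n → R) : Prop :=
  (support (D *ᵥ γ)).ncard = (nonzeroRowsOn D γ).ncard

theorem exists_ne_zero_of_mulVec_apply_ne_zero (D : Matrix m n R) {v : n → R} {r : m}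
    (h : (D *ᵥ v) r ≠ 0) : ∃ c, v c ≠ 0 ∧ D r c ≠ 0 := by
  obtain ⟨c, -, hc⟩ := Finset.exists_ne_zero_of_sum_ne_zero h
  exact ⟨c, right_ne_zero_of_mul hc, left_ne_zero_of_mul hc⟩

theorem support_mulVec_subset_nonzeroRowsOn (D : Matrix m n R) {v γ : n → R}
    (hsupp : support v ⊆ support γ) : support (D *ᵥ v) ⊆ nonzeroRowsOn D γ := fun _ hr =>
  let ⟨c, hvc, hDc⟩ := D.exists_ne_zero_of_mulVec_apply_ne_zero hr
  ⟨c, hsupp hvc, hDc⟩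

theorem HasNonVanishingSupport.support_mulVec_eq [Finite m] {D : Matrix m n R} {γ : n → R}
    (h : D.HasNonVanishingSupport γ) : support (D *ᵥ γ) = nonzeroRowsOn D γ :=
  Set.eq_of_subset_of_ncard_le (D.support_mulVec_subset_nonzeroRowsOn subset_rfl) h.ge

theorem HasNonVanishingSupport.support_mulVec_subset [Finite m] {D : Matrix m n R}
    {γ v : n → R} (h : D.HasNonVanishingSupport γ) (hsupp : support v ⊆ support γ) :
    support (D *ᵥ v) ⊆ support (D *ᵥ γ) :=
  h.support_mulVec_eq ▸ D.support_mulVec_subset_nonzeroRowsOn hsupp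

end Matrix

theorem Finset.card_filter_univ_eq_ncard {α : Type*} [Fintype α] (p : α → Prop)
    [DecidablePred p] : (Finset.univ.filter p).card = {x | p x}.ncard := by
  rw [← Finset.coe_filter_univ, Set.ncard_coe_finset]

/-- Support propagation under the Non-Vanishing-Support (N.V.S.) property: if
`‖Dγ‖₀` equals the number of non-zero rows of `D_T` (`T = supp(γ)`), then for any `γ̂` with
`supp(γ̂) ⊆ supp(γ)` one has `supp(Dγ̂) ⊆ supp(Dγ)`, and consequently `‖Dγ̂‖₀ ≤ ‖Dγ‖₀`. -/
theorem stmt_8 {N M : ℕ} (D : Matrix (Fin N) (Fin M) ℝ) (γ γh : Fin M → ℝ)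
    (hNVS : (Finset.univ.filter fun r => D.mulVec γ r ≠ 0).card =
      (@Finset.filter _ (fun r : Fin N => ∃ c, γ c ≠ 0 ∧ D r c ≠ 0)
        (fun _ => Fintype.decidableExistsFintype) Finset.univ).card)
    (hsupp : ∀ c, γh c ≠ 0 → γ c ≠ 0) :
    (∀ r, D.mulVec γh r ≠ 0 → D.mulVec γ r ≠ 0) ∧
      (Finset.univ.filter fun r => D.mulVec γh r ≠ 0).card ≤
        (Finset.univ.filter fun r => D.mulVec γ r ≠ 0).card := by
  have hNVS' : D.HasNonVanishingSupport γ := by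
    rwa [Finset.card_filter_univ_eq_ncard, Finset.card_filter_univ_eq_ncard] at hNVS
  have hsub : support (D *ᵥ γh) ⊆ support (D *ᵥ γ) := hNVS'.support_mulVec_subset hsupp
  refine ⟨hsub, ?_⟩
  rw [Finset.card_filter_univ_eq_ncard, Finset.card_filter_univ_eq_ncard]
  exact Set.ncard_le_ncard hsub
end

section
/- Error propagation in the greedy multi-layer pursuit: suppose ‖γ̂_L − γ_L‖₂² ≤ E_L² with supp(γ̂_L) ⊆ supp(γ_L) and ‖γ_L‖ˢ_{0,∞} ≤ λ_L, and set γ̂_{i−1} = D_i γ̂_i for i = L,…,1 where γ_{i−1} = D_i γ_i. If each D_i has Stripe-RIP constant δ_{2λ_i} ≤ (2λ_i − 1)μ(D_i) and each γ_i satisfies N.V.S. for D_i with ‖γ_i‖ˢ_{0,∞} ≤ λ_i < ½(1 + 1/μ(D_i)), then for every i: supp(γ̂_i) ⊆ supp(γ_i) and ‖γ̂_i − γ_i‖₂² ≤ E_L² · (3/2)^{L−i}. -/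
/-!
Downward induction on the layer. By N.V.S., the support of `Dᵢγᵢ` is exactly the set of rows of
`Dᵢ` meeting `supp γᵢ`, so `supp γ̂ᵢ ⊆ supp γᵢ` propagates to `γ̂ᵢ₋₁ = Dᵢγ̂ᵢ`. The error
`γ̂ᵢ - γᵢ` is then supported in `supp γᵢ`, hence `λᵢ`-stripe-sparse, and Stripe-RIP maps it with
squared-norm factor `1 + (λᵢ - 1)μ(Dᵢ)`, which the coherence condition keeps below `3/2`.
-/

/-- The stripe `ℓ_{0,∞}` pseudo-norm: maximal number of non-zeros in a stripe. -/
noncomputable def stripeSp {m s : ℕ} (St : Fin s → Finset (Fin m)) (γ : Fin m → ℝ) : ℕ :=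
  Finset.univ.sup fun j => ((St j).filter fun t => γ t ≠ 0).card

/-- Squared Euclidean norm. -/
def nsq {m : ℕ} (v : Fin m → ℝ) : ℝ := ∑ j, (v j) ^ 2

open Classical in
/-- The Non-Vanishing-Support (N.V.S.) property: `‖Dγ‖₀` equals the number of non-zero rows of
`D_T`, where `T = supp(γ)`. -/
def NVS {N M : ℕ} (D : Matrix (Fin N) (Fin M) ℝ) (γ : Fin M → ℝ) : Prop :=
  (Finset.univ.filter fun r => D.mulVec γ r ≠ 0).card =
    (Finset.univ.filter fun r : Fin N => ∃ c, γ c ≠ 0 ∧ D r c ≠ 0).card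

lemma nsq_nonneg {m : ℕ} (v : Fin m → ℝ) : 0 ≤ nsq v :=
  Finset.sum_nonneg fun _ _ => sq_nonneg _

lemma mutualCoherence_nonneg {N M : ℕ} (D : Matrix (Fin N) (Fin M) ℝ) :
    0 ≤ mutualCoherence D :=
  Real.sSup_nonneg fun _ ⟨_, _, _, hx⟩ => hx ▸ abs_nonneg _

/-- For `μ = 0` the junk value `1 / 0 = 0` turns the hypothesis into `lam < 1/2`, and the factor
is `1`. -/
lemma one_add_sub_one_mul_le_three_halves {lam μ : ℝ} (hμ : 0 ≤ μ)
    (hlam : lam < (1 + 1 / μ) / 2) : 1 + (lam - 1) * μ ≤ 3 / 2 := by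
  rcases hμ.eq_or_lt with rfl | hμ
  · norm_num
  · have hmul : lam * μ < (μ + 1) / 2 := by
      calc lam * μ < (1 + 1 / μ) / 2 * μ := mul_lt_mul_of_pos_right hlam hμ
        _ = (μ + 1) / 2 := by field_simp
    linarith

lemma stripeSp_mono {m s : ℕ} (St : Fin s → Finset (Fin m)) {v w : Fin m → ℝ}
    (h : ∀ t, v t ≠ 0 → w t ≠ 0) : stripeSp St v ≤ stripeSp St w :=
  Finset.sup_mono_fun fun _ _ =>
    Finset.card_le_card (Finset.monotone_filter_right _ fun t _ => h t)

lemma exists_ne_zero_of_mulVec_ne_zero {N M : ℕ} {D : Matrix (Fin N) (Fin M) ℝ}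
    {v : Fin M → ℝ} {r : Fin N} (h : D.mulVec v r ≠ 0) : ∃ c, v c ≠ 0 ∧ D r c ≠ 0 := by
  obtain ⟨c, -, hc⟩ := Finset.exists_ne_zero_of_sum_ne_zero (show ∑ c, D r c * v c ≠ 0 from h)
  exact ⟨c, right_ne_zero_of_mul hc, left_ne_zero_of_mul hc⟩

open Classical in
/-- The support of `Dγ` is always contained in the set of rows meeting `supp γ`, and N.V.S. says
the two sets have the same size. -/
lemma mulVec_ne_zero_of_NVS {N M : ℕ} {D : Matrix (Fin N) (Fin M) ℝ} {γ : Fin M → ℝ}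
    (hNVS : NVS D γ) {r : Fin N} {c : Fin M} (hγ : γ c ≠ 0) (hD : D r c ≠ 0) :
    D.mulVec γ r ≠ 0 := by
  have hrows : (Finset.univ.filter fun r => D.mulVec γ r ≠ 0) =
      Finset.univ.filter fun r => ∃ c, γ c ≠ 0 ∧ D r c ≠ 0 :=
    Finset.eq_of_subset_of_card_le
      (Finset.monotone_filter_right _ fun _ _ => exists_ne_zero_of_mulVec_ne_zero) hNVS.ge
  have hr : r ∈ Finset.univ.filter fun r => ∃ c, γ c ≠ 0 ∧ D r c ≠ 0 := by
    simpa using ⟨c, hγ, hD⟩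
  rw [← hrows] at hr
  simpa using hr

lemma support_mulVec_subset_of_NVS {N M : ℕ} {D : Matrix (Fin N) (Fin M) ℝ}
    {γ γh : Fin M → ℝ} (hNVS : NVS D γ) (hsupp : ∀ t, γh t ≠ 0 → γ t ≠ 0) :
    ∀ r, D.mulVec γh r ≠ 0 → D.mulVec γ r ≠ 0 := fun _ hr =>
  let ⟨c, hc, hD⟩ := exists_ne_zero_of_mulVec_ne_zero hr
  mulVec_ne_zero_of_NVS hNVS (hsupp c hc) hD

lemma nsq_mulVec_sub_le_three_halves_mul {N M s : ℕ} {D : Matrix (Fin N) (Fin M) ℝ}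
    (St : Fin s → Finset (Fin M)) {lam : ℕ} {γ γh : Fin M → ℝ}
    (hsupp : ∀ t, γh t ≠ 0 → γ t ≠ 0) (hsp : stripeSp St γ ≤ lam)
    (hcoh : (lam : ℝ) < (1 + 1 / mutualCoherence D) / 2)
    (hSRIP : ∀ w : Fin M → ℝ, stripeSp St w ≤ lam →
      nsq (D.mulVec w) ≤ (1 + ((lam : ℝ) - 1) * mutualCoherence D) * nsq w) :
    nsq (fun r => D.mulVec γh r - D.mulVec γ r) ≤ 3 / 2 * nsq (fun t => γh t - γ t) := by
  have hsupp_sub : ∀ t, γh t - γ t ≠ 0 → γ t ≠ 0 := fun t ht hγ =>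
    ht (by rw [hγ, not_ne_iff.mp (mt (hsupp t) (not_ne_iff.mpr hγ)), sub_zero])
  have hsp_sub : stripeSp St (fun t => γh t - γ t) ≤ lam :=
    (stripeSp_mono St hsupp_sub).trans hsp
  calc nsq (fun r => D.mulVec γh r - D.mulVec γ r)
      = nsq (D.mulVec (fun t => γh t - γ t)) := congrArg nsq (Matrix.mulVec_sub D γh γ).symm
    _ ≤ (1 + ((lam : ℝ) - 1) * mutualCoherence D) * nsq (fun t => γh t - γ t) :=
        hSRIP _ hsp_sub
    _ ≤ 3 / 2 * nsq (fun t => γh t - γ t) :=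
        mul_le_mul_of_nonneg_right
          (one_add_sub_one_mul_le_three_halves (mutualCoherence_nonneg D) hcoh) (nsq_nonneg _)

/-- `D j` is the paper's `D_{j+1}`, and `γ (j+1)` the paper's `γ_{j+1}`. -/
theorem stmt_10_general (L : ℕ) (n : ℕ → ℕ)
    (D : (i : ℕ) → Matrix (Fin (n i)) (Fin (n (i + 1))) ℝ)
    (s : ℕ → ℕ) (St : (i : ℕ) → Fin (s i) → Finset (Fin (n i)))
    (lam : ℕ → ℕ) (EL : ℝ)
    (γ γh : (i : ℕ) → Fin (n i) → ℝ)
    (hchain : ∀ j < L, γ j = (D j).mulVec (γ (j + 1)))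
    (hhchain : ∀ j < L, γh j = (D j).mulVec (γh (j + 1)))
    (hsuppL : ∀ t, γh L t ≠ 0 → γ L t ≠ 0)
    (herrL : nsq (fun t => γh L t - γ L t) ≤ EL ^ 2)
    (hsp : ∀ i, 1 ≤ i → i ≤ L → stripeSp (St i) (γ i) ≤ lam i)
    (hcoh : ∀ j < L, (lam (j + 1) : ℝ) < (1 + 1 / mutualCoherence (D j)) / 2)
    (hNVS : ∀ j < L, NVS (D j) (γ (j + 1)))
    (hSRIP : ∀ j < L, ∀ w : Fin (n (j + 1)) → ℝ, stripeSp (St (j + 1)) w ≤ lam (j + 1) →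
      nsq ((D j).mulVec w) ≤
        (1 + ((lam (j + 1) : ℝ) - 1) * mutualCoherence (D j)) * nsq w) :
    ∀ i, 1 ≤ i → i ≤ L →
      (∀ t, γh i t ≠ 0 → γ i t ≠ 0) ∧
        nsq (fun t => γh i t - γ i t) ≤ EL ^ 2 * (3 / 2 : ℝ) ^ (L - i) := by
  rintro i - hiL
  induction hiL using Nat.decreasingInduction with
  | self => exact ⟨hsuppL, by simpa using herrL⟩
  | of_succ j hj ih =>
    obtain ⟨hsupp, herr⟩ := ih
    rw [hchain j hj, hhchain j hj]
    refine ⟨support_mulVec_subset_of_NVS (hNVS j hj) hsupp, ?_⟩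
    calc nsq (fun t => ((D j).mulVec (γh (j + 1))) t - ((D j).mulVec (γ (j + 1))) t)
        ≤ 3 / 2 * nsq (fun t => γh (j + 1) t - γ (j + 1) t) :=
          nsq_mulVec_sub_le_three_halves_mul (St (j + 1)) hsupp (hsp (j + 1) (by omega) hj)
            (hcoh j hj) (hSRIP j hj)
      _ ≤ 3 / 2 * (EL ^ 2 * (3 / 2 : ℝ) ^ (L - (j + 1))) :=
          mul_le_mul_of_nonneg_left herr (by norm_num)
      _ = EL ^ 2 * (3 / 2 : ℝ) ^ (L - j) := by
        rw [show L - j = L - (j + 1) + 1 by omega, pow_succ]; ring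

/-- Error propagation in the greedy multi-layer pursuit: if the deepest estimate satisfies
`supp(γ̂_L) ⊆ supp(γ_L)` and `‖γ̂_L - γ_L‖₂² ≤ E_L²`, the estimates propagate by
`γ̂_{i-1} = Dᵢ γ̂ᵢ` (as do the true representations), each `γᵢ` satisfies N.V.S. for `Dᵢ` with
`‖γᵢ‖ˢ_{0,∞} ≤ λᵢ < ½(1 + 1/μ(Dᵢ))`, and each `Dᵢ` satisfies the Stripe-RIP bound
`‖Dᵢw‖₂² ≤ (1 + (λᵢ - 1)μ(Dᵢ))‖w‖₂²` on `λᵢ`-stripe-sparse vectors, then for every layer `i`: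
`supp(γ̂ᵢ) ⊆ supp(γᵢ)` and `‖γ̂ᵢ - γᵢ‖₂² ≤ E_L² (3/2)^{L-i}`.
(Here `D j` is the paper's `D_{j+1}`, and `γ (j+1)` the paper's `γ_{j+1}`.) -/
theorem stmt_10 (L : ℕ) (hL : 1 ≤ L) (n : ℕ → ℕ)
    (D : (i : ℕ) → Matrix (Fin (n i)) (Fin (n (i + 1))) ℝ)
    (s : ℕ → ℕ) (St : (i : ℕ) → Fin (s i) → Finset (Fin (n i)))
    (lam : ℕ → ℕ) (EL : ℝ)
    (γ γh : (i : ℕ) → Fin (n i) → ℝ)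
    (hchain : ∀ j < L, γ j = (D j).mulVec (γ (j + 1)))
    (hhchain : ∀ j < L, γh j = (D j).mulVec (γh (j + 1)))
    (hsuppL : ∀ t, γh L t ≠ 0 → γ L t ≠ 0)
    (herrL : nsq (fun t => γh L t - γ L t) ≤ EL ^ 2)
    (hsp : ∀ i, 1 ≤ i → i ≤ L → stripeSp (St i) (γ i) ≤ lam i)
    (hcoh : ∀ j < L, (lam (j + 1) : ℝ) < (1 + 1 / mutualCoherence (D j)) / 2)
    (hNVS : ∀ j < L, NVS (D j) (γ (j + 1)))
    (hSRIP : ∀ j < L, ∀ w : Fin (n (j + 1)) → ℝ, stripeSp (St (j + 1)) w ≤ lam (j + 1) →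
      nsq ((D j).mulVec w) ≤
        (1 + ((lam (j + 1) : ℝ) - 1) * mutualCoherence (D j)) * nsq w) :
    ∀ i, 1 ≤ i → i ≤ L →
      (∀ t, γh i t ≠ 0 → γ i t ≠ 0) ∧
        nsq (fun t => γh i t - γ i t) ≤ EL ^ 2 * (3 / 2 : ℝ) ^ (L - i) :=
  stmt_10_general L n D s St lam EL γ γh hchain hhchain hsuppL herrL hsp hcoh hNVS hSRIP
end

section
/- Coherence-based condition implies RIP invertibility: if k < ½(1 + 1/μ(D)) with μ(D) > 0, then for any γ with ‖γ‖₀ ≤ 2k, the matrix D satisfies ‖Dγ‖₂² ≥ (1 − (2k−1)μ(D))‖γ‖₂² > 0 whenever γ ≠ 0; in particular D is injective on vectors of support size at most 2k, so a representation with ‖γ‖₀ ≤ k in D is unique among all representations with at most k non-zeros. -/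
lemma mu_bound {N M : ℕ} (D : Matrix (Fin N) (Fin M) ℝ) {i j : Fin M} (h : i ≠ j) :
    |∑ r, D r i * D r j| ≤ mutualCoherence D := by
  apply le_csSup
  · apply Set.Finite.bddAbove
    apply Set.Finite.subset (Set.finite_range fun p : Fin M × Fin M => |∑ r, D r p.1 * D r p.2|)
    rintro x ⟨a, b, -, rfl⟩
    exact ⟨(a, b), rfl⟩
  · exact ⟨i, j, h, rfl⟩

lemma expand_mulVec_sq {N M : ℕ} (D : Matrix (Fin N) (Fin M) ℝ) (γ : Fin M → ℝ)
    (S : Finset (Fin M)) (hS : ∀ j ∉ S, γ j = 0) :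
    ∑ i, (D.mulVec γ i) ^ 2 = ∑ j ∈ S, ∑ l ∈ S, γ j * γ l * ∑ r, D r j * D r l := by
  have h1 : ∀ i, D.mulVec γ i = ∑ j ∈ S, D i j * γ j := by
    intro i
    rw [Matrix.mulVec, dotProduct]
    rw [← Finset.sum_subset (Finset.subset_univ S)]
    intro j _ hj
    rw [hS j hj, mul_zero]
  simp_rw [h1, sq, Finset.sum_mul_sum]
  rw [Finset.sum_comm]
  congr 1; ext j
  rw [Finset.sum_comm]
  congr 1; ext l
  rw [Finset.mul_sum]
  congr 1; ext r
  ring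

lemma key_estimate {N M : ℕ} (D : Matrix (Fin N) (Fin M) ℝ)
    (hunit : ∀ j : Fin M, ∑ i, (D i j) ^ 2 = 1)
    (hμ0 : 0 ≤ mutualCoherence D) (γ : Fin M → ℝ) :
    (1 - (((Finset.univ.filter fun j => γ j ≠ 0).card : ℝ) - 1) * mutualCoherence D) *
      ∑ j, γ j ^ 2 ≤ ∑ i, (D.mulVec γ i) ^ 2 := by
  set μ := mutualCoherence D with hμdef
  set S := Finset.univ.filter fun j => γ j ≠ 0 with hSdef
  have hS : ∀ j ∉ S, γ j = 0 := by
    intro j hj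
    by_contra h
    exact hj (by simp [hSdef, h])
  have hsum : ∑ j, γ j ^ 2 = ∑ j ∈ S, γ j ^ 2 :=
    (Finset.sum_subset (Finset.subset_univ S) (fun j _ hj => by rw [hS j hj]; ring)).symm
  rw [expand_mulVec_sq D γ S hS, hsum]
  set Q := ∑ j ∈ S, γ j ^ 2 with hQdef
  set P := ∑ j ∈ S, |γ j| with hPdef
  set c := (S.card : ℝ) with hcdef
  have hsplit : ∑ j ∈ S, ∑ l ∈ S, γ j * γ l * ∑ r, D r j * D r l
      = Q + ∑ j ∈ S, ∑ l ∈ S.erase j, γ j * γ l * ∑ r, D r j * D r l := by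
    rw [hQdef, ← Finset.sum_add_distrib]
    apply Finset.sum_congr rfl
    intro j hj
    rw [← Finset.add_sum_erase _ _ hj]
    congr 1
    have : ∑ r, D r j * D r j = 1 := by simpa [sq] using hunit j
    rw [this]; ring
  rw [hsplit]
  have hR : -(μ * ∑ j ∈ S, ∑ l ∈ S.erase j, |γ j| * |γ l|)
      ≤ ∑ j ∈ S, ∑ l ∈ S.erase j, γ j * γ l * ∑ r, D r j * D r l := by
    rw [Finset.mul_sum, ← Finset.sum_neg_distrib]
    apply Finset.sum_le_sum
    intro j hj
    rw [Finset.mul_sum, ← Finset.sum_neg_distrib]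
    apply Finset.sum_le_sum
    intro l hl
    have hne : j ≠ l := (Finset.ne_of_mem_erase hl).symm
    have h1 : |γ j * γ l * ∑ r, D r j * D r l| ≤ |γ j| * |γ l| * μ := by
      rw [abs_mul, abs_mul]
      exact mul_le_mul_of_nonneg_left (mu_bound D hne) (by positivity)
    calc -(μ * (|γ j| * |γ l|)) = -(|γ j| * |γ l| * μ) := by ring
      _ ≤ -|γ j * γ l * ∑ r, D r j * D r l| := neg_le_neg h1
      _ ≤ _ := neg_abs_le _
  have hA : ∑ j ∈ S, ∑ l ∈ S.erase j, |γ j| * |γ l| = P ^ 2 - Q := by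
    have h1 : ∀ j ∈ S, ∑ l ∈ S.erase j, |γ j| * |γ l| = |γ j| * P - γ j ^ 2 := by
      intro j hj
      rw [← Finset.mul_sum, Finset.sum_erase_eq_sub hj, mul_sub, ← sq_abs (γ j), sq]
    rw [Finset.sum_congr rfl h1, Finset.sum_sub_distrib, ← Finset.sum_mul, ← hPdef, ← hQdef, sq]
  have hCS : P ^ 2 ≤ c * Q := by
    have := sq_sum_le_card_mul_sum_sq (s := S) (f := fun j => |γ j|)
    simpa [sq_abs, ← hPdef, ← hQdef, ← hcdef] using this
  have hQ0 : 0 ≤ Q := Finset.sum_nonneg fun j _ => sq_nonneg _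
  have h2 : μ * (P ^ 2 - Q) ≤ μ * ((c - 1) * Q) :=
    mul_le_mul_of_nonneg_left (by linarith) hμ0
  rw [hA] at hR
  nlinarith [hR, h2]

/-- Coherence-based condition implies RIP invertibility: if `k < ½(1 + 1/μ(D))` with
`μ(D) > 0`, then for any `γ` with at most `2k` non-zeros,
`‖Dγ‖₂² ≥ (1-(2k-1)μ(D))‖γ‖₂²`, which is positive whenever `γ ≠ 0`; in particular a
representation with at most `k` non-zeros is unique among all such representations. -/
theorem stmt_15 {N M k : ℕ} (D : Matrix (Fin N) (Fin M) ℝ)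
    (hunit : ∀ j : Fin M, ∑ i, (D i j) ^ 2 = 1)
    (hμ : 0 < mutualCoherence D)
    (hk : (k : ℝ) < (1 + 1 / mutualCoherence D) / 2) :
    (∀ γ : Fin M → ℝ, (Finset.univ.filter fun j => γ j ≠ 0).card ≤ 2 * k →
      ((1 - (2 * (k : ℝ) - 1) * mutualCoherence D) * ∑ j, (γ j) ^ 2 ≤
          ∑ i, (D.mulVec γ i) ^ 2) ∧
        (γ ≠ 0 → 0 < ∑ i, (D.mulVec γ i) ^ 2)) ∧
      ∀ γ₁ γ₂ : Fin M → ℝ,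
        (Finset.univ.filter fun j => γ₁ j ≠ 0).card ≤ k →
        (Finset.univ.filter fun j => γ₂ j ≠ 0).card ≤ k →
        D.mulVec γ₁ = D.mulVec γ₂ → γ₁ = γ₂ := by
  set μ := mutualCoherence D with hμdef
  have hcoef : 0 < 1 - (2 * (k : ℝ) - 1) * μ := by
    have h2 : 2 * (k : ℝ) - 1 < 1 / μ := by linarith
    have h3 : (2 * (k : ℝ) - 1) * μ < (1 / μ) * μ := mul_lt_mul_of_pos_right h2 hμ
    have h4 : (1 / μ) * μ = 1 := by field_simp
    linarith
  have part1 : ∀ γ : Fin M → ℝ, (Finset.univ.filter fun j => γ j ≠ 0).card ≤ 2 * k →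
      ((1 - (2 * (k : ℝ) - 1) * μ) * ∑ j, (γ j) ^ 2 ≤ ∑ i, (D.mulVec γ i) ^ 2) ∧
        (γ ≠ 0 → 0 < ∑ i, (D.mulVec γ i) ^ 2) := by
    intro γ hcard
    have hmain := key_estimate D hunit hμ.le γ
    have hc : (((Finset.univ.filter fun j => γ j ≠ 0).card : ℝ) - 1) * μ
        ≤ (2 * (k : ℝ) - 1) * μ := by
      apply mul_le_mul_of_nonneg_right _ hμ.le
      have : ((Finset.univ.filter fun j => γ j ≠ 0).card : ℝ) ≤ 2 * k := by
        exact_mod_cast hcard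
      linarith
    have hQ0 : 0 ≤ ∑ j, (γ j) ^ 2 := Finset.sum_nonneg fun j _ => sq_nonneg _
    have hle : (1 - (2 * (k : ℝ) - 1) * μ) * ∑ j, (γ j) ^ 2 ≤ ∑ i, (D.mulVec γ i) ^ 2 := by
      calc (1 - (2 * (k : ℝ) - 1) * μ) * ∑ j, (γ j) ^ 2
          ≤ (1 - (((Finset.univ.filter fun j => γ j ≠ 0).card : ℝ) - 1) * μ) *
              ∑ j, (γ j) ^ 2 := mul_le_mul_of_nonneg_right (by linarith) hQ0
        _ ≤ _ := hmain
    refine ⟨hle, fun hne => ?_⟩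
    obtain ⟨j, hj⟩ := Function.ne_iff.mp hne
    have hQpos : 0 < ∑ j, (γ j) ^ 2 := by
      have : 0 < (γ j) ^ 2 := by simp only [Pi.zero_apply] at hj; positivity
      exact this.trans_le (Finset.single_le_sum (fun i _ => sq_nonneg (γ i))
        (Finset.mem_univ j))
    exact (mul_pos hcoef hQpos).trans_le hle
  refine ⟨part1, fun γ₁ γ₂ h1 h2 heq => ?_⟩
  by_contra hne
  set γ := γ₁ - γ₂ with hγdef
  have hγne : γ ≠ 0 := sub_ne_zero.mpr hne
  have hsub : (Finset.univ.filter fun j => γ j ≠ 0) ⊆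
      (Finset.univ.filter fun j => γ₁ j ≠ 0) ∪ (Finset.univ.filter fun j => γ₂ j ≠ 0) := by
    intro j hj
    simp only [Finset.mem_filter, Finset.mem_union, Finset.mem_univ, true_and] at hj ⊢
    by_contra h
    push_neg at h
    exact hj (by simp [hγdef, h.1, h.2])
  have hcard : (Finset.univ.filter fun j => γ j ≠ 0).card ≤ 2 * k := by
    calc (Finset.univ.filter fun j => γ j ≠ 0).card
        ≤ ((Finset.univ.filter fun j => γ₁ j ≠ 0) ∪
            (Finset.univ.filter fun j => γ₂ j ≠ 0)).card := Finset.card_le_card hsub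
      _ ≤ _ + _ := Finset.card_union_le _ _
      _ ≤ 2 * k := by omega
  have h0 : D.mulVec γ = 0 := by
    rw [hγdef, Matrix.mulVec_sub, heq, sub_self]
  have := (part1 γ hcard).2 hγne
  rw [h0] at this
  simp at this
end

section
/- The effective dictionary of a two-layer convolutional model is convolutional: if D₁ is a concatenation of m₁ banded circulant matrices with band n₁ and D₂ is a concatenation of m₂ banded circulant matrices (with stride m₁ in the channel index) with band n₂m₁, then D⁽²⁾ = D₁D₂ is a concatenation of m₂ banded circulant matrices, each with band (i.e., effective filter length) n₂ + n₁ − 1. -/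
/-- A single-channel-input convolutional dictionary on `ZMod N` with `m` filters, each supported
on a band of `n` consecutive offsets: column `(j, c)` is the cyclic shift by `j` of filter `c`. -/
def IsConvDict1 {N m : ℕ} [NeZero N] (D : Matrix (ZMod N) (ZMod N × Fin m) ℝ) (n : ℕ) : Prop :=
  ∃ f : Fin m → ZMod N → ℝ,
    (∀ c t, f c t ≠ 0 → ∃ s : ℕ, s < n ∧ t = (s : ZMod N)) ∧
    ∀ i j c, D i (j, c) = f c (i - j)

/-- A convolutional dictionary whose rows carry `m₁` channels (stride `m₁` in the channel index):
column `(j, b)` is the shift by `j` of the `m₁`-channel filter `b`, supported on a band of `n`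
consecutive spatial offsets. -/
def IsConvDict2 {N m₁ m₂ : ℕ} [NeZero N]
    (D : Matrix (ZMod N × Fin m₁) (ZMod N × Fin m₂) ℝ) (n : ℕ) : Prop :=
  ∃ g : Fin m₂ → ZMod N → Fin m₁ → ℝ,
    (∀ b t a, g b t a ≠ 0 → ∃ s : ℕ, s < n ∧ t = (s : ZMod N)) ∧
    ∀ i a j b, D (i, a) (j, b) = g b (i - j) a

/-- The effective dictionary of a two-layer convolutional model is convolutional: if `D₁` is a
concatenation of `m₁` banded circulant matrices with band `n₁` and `D₂` is a concatenation of
`m₂` banded circulant matrices (with stride `m₁` in the channel index) with band `n₂` (i.e.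
`n₂ m₁` entries counting channels), then `D⁽²⁾ = D₁D₂` is a concatenation of `m₂` banded
circulant matrices with band (effective filter length) `n₁ + n₂ - 1`. -/
theorem stmt_16 {N m₁ m₂ n₁ n₂ : ℕ} [NeZero N]
    (D₁ : Matrix (ZMod N) (ZMod N × Fin m₁) ℝ)
    (D₂ : Matrix (ZMod N × Fin m₁) (ZMod N × Fin m₂) ℝ)
    (h₁ : IsConvDict1 D₁ n₁) (h₂ : IsConvDict2 D₂ n₂) :
    IsConvDict1 (D₁ * D₂) (n₁ + n₂ - 1) := by
  obtain ⟨f, hf, hDf⟩ := h₁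
  obtain ⟨g, hg, hDg⟩ := h₂
  refine ⟨fun c t => ∑ ka : ZMod N × Fin m₁, f ka.2 (t - ka.1) * g c ka.1 ka.2, ?_, ?_⟩
  · intro c t hne
    obtain ⟨⟨k, a⟩, -, h0⟩ := Finset.exists_ne_zero_of_sum_ne_zero hne
    have hf0 : f a (t - k) ≠ 0 := fun h => h0 (by simp [h])
    have hg0 : g c k a ≠ 0 := fun h => h0 (by simp [h])
    obtain ⟨s₁, hs₁, ht₁⟩ := hf a (t - k) hf0
    obtain ⟨s₂, hs₂, ht₂⟩ := hg c k a hg0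
    refine ⟨s₁ + s₂, by omega, ?_⟩
    have : t = (t - k) + k := by ring
    rw [this, ht₁, ht₂]
    push_cast
    ring
  · intro i j c
    show _ = ∑ ka : ZMod N × Fin m₁, f ka.2 (i - j - ka.1) * g c ka.1 ka.2
    rw [Matrix.mul_apply]
    rw [← (Equiv.prodCongr (Equiv.subRight j) (Equiv.refl (Fin m₁))).sum_comp
        (fun ka : ZMod N × Fin m₁ => f ka.2 (i - j - ka.1) * g c ka.1 ka.2)]
    refine Finset.sum_congr rfl fun ka _ => ?_
    obtain ⟨k, a⟩ := ka
    rw [hDf, hDg]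
    simp only [Equiv.prodCongr_apply, Equiv.coe_refl, Prod.map, Equiv.subRight_apply, id]
    congr 1
    ring
end
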